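/- arXiv:1304.4368 — 5 statements merged into one kernel-verified Lean document; each statement's English description precedes it below -/
import Mathlib

section
/- For all natural numbers 𝓜 and m, the identity ∑_{l=0}^{⌊m/2⌋} (-1)^l · C(2𝓜 - 2l, m - 2l) · C(𝓜, l) = 2^m · C(𝓜, m) holds, where C(a, b) denotes the binomial coefficient (equal to 0 when b > a). -/
open Polynomial Finset

private lemma coeff_term (𝓜 m l : ℕ) :
    ((-X ^ 2) ^ l * ((1 + X) ^ 2) ^ (𝓜 - l) * ((𝓜.choose l : ℤ) : ℤ[X])).coeff m
      = (-1 : ℤ) ^ l * (if 2 * l ≤ m then ((2 * (𝓜 - l)).choose (m - 2 * l) : ℤ) else 0)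
          * (𝓜.choose l : ℤ) := by
  have h : ((-X ^ 2 : ℤ[X])) ^ l * ((1 + X) ^ 2) ^ (𝓜 - l) * ((𝓜.choose l : ℤ) : ℤ[X])
      = C ((-1 : ℤ) ^ l * (𝓜.choose l : ℤ)) * (X ^ (2 * l) * (1 + X) ^ (2 * (𝓜 - l))) := by
    simp only [map_mul, map_pow, map_neg, map_one, C_eq_intCast, Int.cast_natCast,
      C_eq_natCast, ← pow_mul]
    ring
  rw [h, coeff_C_mul, coeff_X_pow_mul']
  simp only [coeff_one_add_X_pow]
  split_ifs <;> ring

private lemma coeff_one_add_two_X_pow (𝓜 m : ℕ) :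
    (((1 : ℤ[X]) + 2 * X) ^ 𝓜).coeff m = 2 ^ m * (𝓜.choose m : ℤ) := by
  rw [add_comm, add_pow, finset_sum_coeff]
  have hterm : ∀ k, (((2 * X : ℤ[X]) ^ k * 1 ^ (𝓜 - k) * (𝓜.choose k : ℤ[X])).coeff m)
      = if k = m then 2 ^ m * (𝓜.choose m : ℤ) else 0 := by
    intro k
    have h2 : ((2 : ℤ[X]) * X) ^ k = C ((2 : ℤ) ^ k) * X ^ k := by
      rw [mul_pow, map_pow]; norm_num
    rw [one_pow, mul_one, h2, ← C_eq_natCast, mul_assoc, coeff_C_mul, coeff_mul_C, coeff_X_pow]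
    by_cases h : k = m
    · subst h; simp
    · simp [h, Ne.symm h]
  simp only [hterm]
  rw [Finset.sum_ite_eq' (range (𝓜 + 1)) m]
  split_ifs with h
  · rfl
  · rw [mem_range, not_lt] at h
    rw [Nat.choose_eq_zero_of_lt h]
    simp

/-- For all natural numbers `𝓜` and `m`,
`∑_{l=0}^{⌊m/2⌋} (-1)^l · C(2𝓜 - 2l, m - 2l) · C(𝓜, l) = 2^m · C(𝓜, m)`. -/
theorem sum_binomial_identity (𝓜 m : ℕ) :
    ∑ l ∈ Finset.range (m / 2 + 1),
      (-1 : ℤ) ^ l * ((2 * 𝓜 - 2 * l).choose (m - 2 * l) : ℤ) * (𝓜.choose l : ℤ)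
      = 2 ^ m * (𝓜.choose m : ℤ) := by
  set N := max 𝓜 (m / 2) with hN
  set f : ℕ → ℤ := fun l =>
    (-1 : ℤ) ^ l * (if 2 * l ≤ m then ((2 * (𝓜 - l)).choose (m - 2 * l) : ℤ) else 0)
      * (𝓜.choose l : ℤ) with hf
  have key : ∑ l ∈ range (𝓜 + 1), f l = 2 ^ m * (𝓜.choose m : ℤ) := by
    rw [← coeff_one_add_two_X_pow 𝓜 m]
    have h1 : ((1 : ℤ[X]) + 2 * X) ^ 𝓜 = ((-X ^ 2) + (1 + X) ^ 2) ^ 𝓜 := by ring_nf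
    rw [h1, add_pow, finset_sum_coeff]
    exact Finset.sum_congr rfl fun l _ => (coeff_term 𝓜 m l).symm
  have h1 : ∑ l ∈ range (m / 2 + 1),
      (-1 : ℤ) ^ l * ((2 * 𝓜 - 2 * l).choose (m - 2 * l) : ℤ) * (𝓜.choose l : ℤ)
      = ∑ l ∈ range (m / 2 + 1), f l := by
    refine Finset.sum_congr rfl fun l hl => ?_
    rw [mem_range] at hl
    have h2 : 2 * l ≤ m := by omega
    simp only [hf, if_pos h2]
    have h3 : 2 * 𝓜 - 2 * l = 2 * (𝓜 - l) := by omega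
    rw [h3]
  have h2 : ∑ l ∈ range (m / 2 + 1), f l = ∑ l ∈ range (N + 1), f l := by
    refine Finset.sum_subset ?_ ?_
    · intro x hx; rw [mem_range] at *; rw [hN]; omega
    · intro l _ hl
      rw [mem_range, not_lt] at hl
      have : ¬ 2 * l ≤ m := by omega
      simp [hf, this]
  have h3 : ∑ l ∈ range (𝓜 + 1), f l = ∑ l ∈ range (N + 1), f l := by
    refine Finset.sum_subset ?_ ?_
    · intro x hx; rw [mem_range] at *; rw [hN]; omega
    · intro l _ hl
      rw [mem_range, not_lt] at hl
      simp [hf, Nat.choose_eq_zero_of_lt (show 𝓜 < l by omega)]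
  rw [h1, h2, ← h3, key]
end

section
/- For every integer M ≥ 2 and every γ > 0, the function f_M is differentiable on ℝ and satisfies f_M'(x) = -(x/(2(M-1))) · f_{M-1}(x) for all real x. -/
/-!
Write `θ_m` for the reverse Bessel polynomial, so that `f_{m+1}(x)` is a constant multiple of
`e^{-t} θ_m(t)` at `t = γ|x|`. The coefficient identity `θ_{m+1} - θ_{m+1}' = X θ_m` says that
`(e^{-t} θ_{m+1}(t))' = -t e^{-t} θ_m(t)`. This derivative has the form `t · k(t)`, so it
vanishes at `0`, which is what makes `f_{m+2}` differentiable at the kink of `|x|`; the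
constants in front of `f_{m+2}` and `f_{m+1}` differ by the factor `2 (m + 1) γ²`.
-/

open Finset

/-- For an integer `M ≥ 1` and real `γ > 0`, the function
`f_M(x) = (π/(γ^{2M-1} 2^{M-1} (M-1)!)) · e^{-γ|x|} ·
  ∑_{l=0}^{M-1} ((M-1+l)!/(l!(M-1-l)! 2^l)) |γx|^{M-1-l}`. -/
noncomputable def fM (γ : ℝ) (M : ℕ) (x : ℝ) : ℝ :=
  Real.pi / (γ ^ (2 * M - 1) * 2 ^ (M - 1) * (Nat.factorial (M - 1))) *
    Real.exp (-γ * |x|) *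
    ∑ l ∈ Finset.range M,
      ((Nat.factorial (M - 1 + l) : ℝ) /
        ((Nat.factorial l : ℝ) * (Nat.factorial (M - 1 - l) : ℝ) * 2 ^ l)) *
      |γ * x| ^ (M - 1 - l)

open Polynomial Nat Set

theorem hasDerivAt_comp_abs {F : Type*} [NormedAddCommGroup F] [NormedSpace ℝ F] {h k : ℝ → F}
    (hh : ∀ u, 0 ≤ u → HasDerivAt h (u • k u) u) (x : ℝ) :
    HasDerivAt (fun y => h |y|) (x • k |x|) x := by
  have right {x : ℝ} (hx : 0 ≤ x) :
      HasDerivWithinAt (fun y => h |y|) (x • k |x|) (Ici 0) x := by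
    rw [abs_of_nonneg hx]
    exact (hh x hx).hasDerivWithinAt.congr (fun y hy => by rw [abs_of_nonneg hy])
      (by rw [abs_of_nonneg hx])
  have left {x : ℝ} (hx : x ≤ 0) :
      HasDerivWithinAt (fun y => h |y|) (x • k |x|) (Iic 0) x := by
    have := ((hh (-x) (neg_nonneg.2 hx)).scomp x (hasDerivAt_neg x)).hasDerivWithinAt (s := Iic 0)
    rw [neg_one_smul, neg_smul, neg_neg] at this
    rw [abs_of_nonpos hx]
    exact this.congr (fun y hy => by simp [abs_of_nonpos (show y ≤ 0 from hy)])
      (by simp [abs_of_nonpos hx])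
  rcases lt_trichotomy x 0 with hx | rfl | hx
  · exact (left hx.le).hasDerivAt (Iic_mem_nhds hx)
  · simpa using (left le_rfl).union (right le_rfl)
  · exact (right hx.le).hasDerivAt (Ici_mem_nhds hx)

-- The coefficient of `X ^ j`; the `if` keeps truncated subtraction from giving junk for `j > n`.
noncomputable def reverseBesselCoeff (n j : ℕ) : ℝ :=
  if j ≤ n then (2 * n - j)! / ((n - j)! * j ! * 2 ^ (n - j)) else 0

noncomputable def reverseBessel (n : ℕ) : ℝ[X] :=
  ∑ j ∈ range (n + 1), C (reverseBesselCoeff n j) * X ^ j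

theorem coeff_reverseBessel (n j : ℕ) : (reverseBessel n).coeff j = reverseBesselCoeff n j := by
  simp only [reverseBessel, finsetSum_coeff, coeff_C_mul_X_pow, sum_ite_eq, Finset.mem_range]
  split_ifs with h
  · rfl
  · simp [reverseBesselCoeff, show ¬ j ≤ n by omega]

theorem reverseBesselCoeff_one (n : ℕ) :
    reverseBesselCoeff (n + 1) 1 = reverseBesselCoeff (n + 1) 0 := by
  simp only [reverseBesselCoeff, le_add_iff_nonneg_left, zero_le, if_true,
    show 1 ≤ n + 1 by omega, add_tsub_cancel_right, tsub_zero, factorial_zero]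
  rw [show 2 * (n + 1) = (2 * n + 1) + 1 by ring, Nat.add_sub_cancel, factorial_succ (2 * n + 1),
    factorial_succ n, pow_succ]
  push_cast
  field_simp
  ring

theorem reverseBesselCoeff_succ (n j : ℕ) :
    reverseBesselCoeff (n + 1) (j + 1) - (j + 2) * reverseBesselCoeff (n + 1) (j + 2)
      = reverseBesselCoeff n j := by
  rcases lt_trichotomy j n with h | rfl | h
  · obtain ⟨k, rfl⟩ : ∃ k, n = j + k + 1 := ⟨n - j - 1, by omega⟩
    simp only [reverseBesselCoeff, show j + 1 ≤ j + k + 1 + 1 by omega,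
      show j + 2 ≤ j + k + 1 + 1 by omega, show j ≤ j + k + 1 by omega, if_true]
    rw [show 2 * (j + k + 1 + 1) - (j + 1) = (j + 2 * k + 2) + 1 by omega,
      show 2 * (j + k + 1 + 1) - (j + 2) = j + 2 * k + 2 by omega,
      show 2 * (j + k + 1) - j = j + 2 * k + 2 by omega,
      show j + k + 1 + 1 - (j + 1) = k + 1 by omega,
      show j + k + 1 + 1 - (j + 2) = k by omega,
      show j + k + 1 - j = k + 1 by omega,
      factorial_succ (j + 2 * k + 2), factorial_succ k, factorial_succ (j + 1), factorial_succ j]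
    push_cast
    field_simp
    ring
  · simp [reverseBesselCoeff, two_mul, factorial_ne_zero]
  · simp [reverseBesselCoeff, show ¬ j + 1 ≤ n + 1 by omega, show ¬ j + 2 ≤ n + 1 by omega,
      show ¬ j ≤ n by omega]

theorem reverseBessel_sub_derivative (n : ℕ) :
    reverseBessel (n + 1) - derivative (reverseBessel (n + 1)) = X * reverseBessel n := by
  ext (_ | j)
  · simp [coeff_derivative, coeff_reverseBessel, reverseBesselCoeff_one]
  · simp only [coeff_sub, coeff_derivative, coeff_X_mul, coeff_reverseBessel]
    rw [← reverseBesselCoeff_succ n j]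
    push_cast
    ring

theorem hasDerivAt_exp_neg_mul_reverseBessel (n : ℕ) (t : ℝ) :
    HasDerivAt (fun t => Real.exp (-t) * (reverseBessel (n + 1)).eval t)
      (-(t * (Real.exp (-t) * (reverseBessel n).eval t))) t := by
  have hθ := congrArg (eval t) (reverseBessel_sub_derivative n)
  simp only [eval_sub, eval_mul, eval_X] at hθ
  exact ((hasDerivAt_neg t).exp.fun_mul ((reverseBessel (n + 1)).hasDerivAt t)).congr_deriv
    (by linear_combination -Real.exp (-t) * hθ)

theorem fM_succ_eq_exp_mul_reverseBessel {γ : ℝ} (hγ : 0 < γ) (m : ℕ) (x : ℝ) :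
    fM γ (m + 1) x = Real.pi / (γ ^ (2 * m + 1) * 2 ^ m * m !) *
      (Real.exp (-(γ * |x|)) * (reverseBessel m).eval (γ * |x|)) := by
  have hθ : (reverseBessel m).eval (γ * |x|) = ∑ l ∈ range (m + 1),
      ((m + l)! : ℝ) / (l ! * (m - l)! * 2 ^ l) * (γ * |x|) ^ (m - l) := by
    rw [reverseBessel, eval_finsetSum, ← sum_range_reflect]
    refine sum_congr rfl fun l hl => ?_
    have hlm : l ≤ m := Finset.mem_range_succ_iff.1 hl
    simp only [eval_mul, eval_C, eval_pow, eval_X, reverseBesselCoeff, add_tsub_cancel_right,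
      show m - l ≤ m by omega, if_true, show 2 * m - (m - l) = m + l by omega,
      show m - (m - l) = l by omega]
  rw [hθ, fM, abs_mul, abs_of_pos hγ, show 2 * (m + 1) - 1 = 2 * m + 1 by omega,
    add_tsub_cancel_right, neg_mul, mul_assoc]

/-- For every integer `M ≥ 2` and every `γ > 0`, the function `f_M`
is differentiable on `ℝ` and `f_M'(x) = -(x/(2(M-1))) · f_{M-1}(x)` for all real `x`. -/
theorem fM_differentiable_and_deriv (M : ℕ) (hM : 2 ≤ M) (γ : ℝ) (hγ : 0 < γ) :
    Differentiable ℝ (fM γ M) ∧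
      ∀ x : ℝ, deriv (fM γ M) x = -(x / (2 * ((M : ℝ) - 1))) * fM γ (M - 1) x := by
  obtain ⟨n, rfl⟩ : ∃ n, M = n + 2 := ⟨M - 2, by omega⟩
  set c := Real.pi / (γ ^ (2 * (n + 1) + 1) * 2 ^ (n + 1) * (n + 1)!) with hc
  set k : ℝ → ℝ := fun u =>
    -(c * γ ^ 2 * (Real.exp (-(γ * u)) * (reverseBessel n).eval (γ * u)))
  have hderiv : ∀ x, HasDerivAt (fM γ (n + 2)) (x * k |x|) x := by
    have hf : fM γ (n + 2) = fun x =>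
        c * (Real.exp (-(γ * |x|)) * (reverseBessel (n + 1)).eval (γ * |x|)) :=
      funext (fM_succ_eq_exp_mul_reverseBessel hγ (n + 1))
    rw [hf]
    refine hasDerivAt_comp_abs (h := fun u =>
      c * (Real.exp (-(γ * u)) * (reverseBessel (n + 1)).eval (γ * u))) (fun u _ => ?_)
    exact (((hasDerivAt_exp_neg_mul_reverseBessel n (γ * u)).comp u
      ((hasDerivAt_id u).const_mul γ)).const_mul c).congr_deriv
      (by simp only [k, smul_eq_mul]; ring)
  have hconst : Real.pi / (γ ^ (2 * n + 1) * 2 ^ n * n !) = 2 * (n + 1) * γ ^ 2 * c := by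
    rw [hc, factorial_succ]
    push_cast
    field_simp
    ring
  refine ⟨fun x => (hderiv x).differentiableAt, fun x => (hderiv x).deriv.trans ?_⟩
  rw [show n + 2 - 1 = n + 1 from rfl, fM_succ_eq_exp_mul_reverseBessel hγ n, hconst]
  simp only [k]
  push_cast
  rw [show (n : ℝ) + 2 - 1 = n + 1 by ring]
  field_simp
end

section
/- Fix an integer M ≥ 1 and γ > 0. There exists a nonzero constant C, depending only on M and γ (but not on the points x_1, …, x_M), such that for all real numbers x_1, …, x_M one has det[ x_j^{i-1} · f_{M-i+1}(x_j) ]_{i,j=1}^{M} = C · det[ g_{M-i}(x_j) ]_{i,j=1}^{M}. -/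
open Finset
open Polynomial

/-- For integers `1 ≤ n ≤ M` and real `γ > 0`, the function
`g_{M-n}(x) = e^{-γ|x|} · x^{n-1} · ∑_{l=0}^{M-n} |γx|^l / l!`,
here given in terms of `n`. -/
noncomputable def gMn (γ : ℝ) (M n : ℕ) (x : ℝ) : ℝ :=
  Real.exp (-γ * |x|) * x ^ (n - 1) *
    ∑ l ∈ Finset.range (M - n + 1), |γ * x| ^ l / (Nat.factorial l : ℝ)

lemma h1' (ν k : ℕ) (hk : k ≤ ν) : (((1:ℝ[X]) + 2*X)^ν).coeff k = (ν.choose k : ℝ) * 2^k := by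
  rw [add_comm, add_pow, Polynomial.finset_sum_coeff]
  have : ∀ i ∈ Finset.range (ν+1),
      ((2*X)^i * 1^(ν-i) * (ν.choose i : ℝ[X])).coeff k
      = if i = k then (ν.choose k : ℝ) * 2^k else 0 := by
    intro i _
    rw [one_pow, mul_one, mul_pow,
      show ((2:ℝ[X])^i = Polynomial.C (2^i : ℝ)) by rw [Polynomial.C_pow, map_ofNat],
      (Polynomial.C_eq_natCast (ν.choose i)).symm]
    rw [mul_comm (Polynomial.C (2^i:ℝ) * X^i), ← mul_assoc, ← Polynomial.C_mul, Polynomial.coeff_C_mul, Polynomial.coeff_X_pow]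
    by_cases h : i = k
    · simp [h, mul_comm]
    · simp [h, Ne.symm h]
  rw [Finset.sum_congr rfl this, Finset.sum_ite_eq' _ k]
  simp [Finset.mem_range, Nat.lt_succ_of_le hk]

lemma keyA (ν k : ℕ) (hk : k ≤ ν) :
    ∑ j ∈ Finset.range (ν+1), (if 2*j ≤ k then ((-1:ℝ)^j * (ν.choose j : ℝ) * ((2*ν-2*j).choose (k-2*j) : ℝ)) else 0)
    = (ν.choose k : ℝ) * 2^k := by
  have base : ((1:ℝ[X]) + 2*X)^ν = ∑ j ∈ Finset.range (ν+1), (-(X^2))^j * ((1+X)^2)^(ν-j) * (ν.choose j : ℝ[X]) := by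
    rw [show ((1:ℝ[X]) + 2*X) = -(X^2) + (1+X)^2 by ring, add_pow]
  have h2 := congrArg (fun p : ℝ[X] => p.coeff k) base
  rw [h1' ν k hk, Polynomial.finset_sum_coeff] at h2
  rw [h2]
  apply Finset.sum_congr rfl
  intro j hj
  have hjν : j ≤ ν := Nat.lt_succ_iff.mp (Finset.mem_range.mp hj)
  have e1 : ((-(X^2) : ℝ[X]))^j = Polynomial.C ((-1:ℝ)^j) * X^(2*j) := by
    rw [neg_pow, ← pow_mul]
    simp [Polynomial.C_pow]
  have e2 : (((1+X)^2 : ℝ[X]))^(ν-j) = (1+X)^(2*ν-2*j) := by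
    rw [← pow_mul]
    congr 1
    omega
  rw [e1, e2, (Polynomial.C_eq_natCast (ν.choose j)).symm,
    show (Polynomial.C ((-1:ℝ)^j) * X^(2*j) * (1+X)^(2*ν-2*j) * Polynomial.C ((ν.choose j : ℝ)))
      = Polynomial.C ((-1:ℝ)^j * (ν.choose j:ℝ)) * (X^(2*j) * (1+X)^(2*ν-2*j)) by
        rw [Polynomial.C_mul]; ring,
    Polynomial.coeff_C_mul, Polynomial.coeff_X_pow_mul']
  rw [Polynomial.coeff_one_add_X_pow]
  by_cases h : 2*j ≤ k
  · simp only [h, if_true]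
    try ring
  · simp [h]

/-- coefficients in the expansion of the reverse Bessel polynomial in shifted
truncated exponentials -/
noncomputable def cC (ν j : ℕ) : ℝ :=
  (-1)^j * ((2*ν-2*j).factorial : ℝ) / ((j.factorial : ℝ) * ((ν-j).factorial : ℝ) * 2^ν)

lemma keyB (ν k : ℕ) (hk : k ≤ ν) :
    ∑ j ∈ Finset.range (ν+1), (if 2*j ≤ k then cC ν j / ((k-2*j).factorial : ℝ) else 0)
    = ((2*ν-k).factorial : ℝ) / (((ν-k).factorial : ℝ) * (k.factorial : ℝ) * 2^(ν-k)) := by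
  have key := keyA ν k hk
  set D : ℝ := ((2*ν-k).factorial : ℝ) / ((ν.factorial : ℝ) * 2^ν) with hD
  have hfac : ∀ j, j ≤ ν → 2*j ≤ k →
      ((-1:ℝ)^j * (ν.choose j : ℝ) * ((2*ν-2*j).choose (k-2*j) : ℝ)) * D
      = cC ν j / ((k-2*j).factorial : ℝ) := by
    intro j hjν hjk
    rw [Nat.cast_choose ℝ hjν, Nat.cast_choose ℝ (show k-2*j ≤ 2*ν-2*j by omega),
      show (2*ν-2*j) - (k-2*j) = 2*ν-k by omega, hD, cC]
    have h1 : ((ν-j).factorial : ℝ) ≠ 0 := Nat.cast_ne_zero.mpr (Nat.factorial_ne_zero _)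
    have h2 : ((k-2*j).factorial : ℝ) ≠ 0 := Nat.cast_ne_zero.mpr (Nat.factorial_ne_zero _)
    have h3 : ((2*ν-k).factorial : ℝ) ≠ 0 := Nat.cast_ne_zero.mpr (Nat.factorial_ne_zero _)
    have h4 : (ν.factorial : ℝ) ≠ 0 := Nat.cast_ne_zero.mpr (Nat.factorial_ne_zero _)
    have h5 : (j.factorial : ℝ) ≠ 0 := Nat.cast_ne_zero.mpr (Nat.factorial_ne_zero _)
    have h6 : ((2:ℝ))^ν ≠ 0 := by positivity
    field_simp
  calc ∑ j ∈ Finset.range (ν+1), (if 2*j ≤ k then cC ν j / ((k-2*j).factorial : ℝ) else 0)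
      = ∑ j ∈ Finset.range (ν+1),
          (if 2*j ≤ k then ((-1:ℝ)^j * (ν.choose j : ℝ) * ((2*ν-2*j).choose (k-2*j) : ℝ)) else 0) * D := by
        apply Finset.sum_congr rfl
        intro j hj
        rw [ite_mul, zero_mul]
        by_cases h : 2*j ≤ k
        · simp only [h, if_true]
          rw [hfac j (Nat.lt_succ_iff.mp (Finset.mem_range.mp hj)) h]
        · simp [h]
    _ = ((ν.choose k : ℝ) * 2^k) * D := by rw [← Finset.sum_mul, key]
    _ = ((2*ν-k).factorial : ℝ) / (((ν-k).factorial : ℝ) * (k.factorial : ℝ) * 2^(ν-k)) := by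
        rw [Nat.cast_choose ℝ hk, hD]
        have h1 : ((ν-k).factorial : ℝ) ≠ 0 := Nat.cast_ne_zero.mpr (Nat.factorial_ne_zero _)
        have h2 : (k.factorial : ℝ) ≠ 0 := Nat.cast_ne_zero.mpr (Nat.factorial_ne_zero _)
        have h4 : (ν.factorial : ℝ) ≠ 0 := Nat.cast_ne_zero.mpr (Nat.factorial_ne_zero _)
        have h6 : ((2:ℝ))^ν ≠ 0 := by positivity
        have h7 : ((2:ℝ))^(ν-k) ≠ 0 := by positivity
        have hsplit : ((2:ℝ))^ν = 2^k * 2^(ν-k) := by rw [← pow_add]; congr 1; omega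
        field_simp
        rw [hsplit]

lemma keyC (ν : ℕ) (t : ℝ) :
    ∑ l ∈ Finset.range (ν+1), (((ν+l).factorial : ℝ) / ((l.factorial : ℝ) * ((ν-l).factorial : ℝ) * 2^l)) * t^(ν-l)
    = ∑ j ∈ Finset.range (ν+1), (if 2*j ≤ ν then cC ν j * t^(2*j) * ∑ m ∈ Finset.range (ν-2*j+1), t^m / (m.factorial : ℝ) else 0) := by
  have hL : ∑ l ∈ Finset.range (ν+1), (((ν+l).factorial : ℝ) / ((l.factorial : ℝ) * ((ν-l).factorial : ℝ) * 2^l)) * t^(ν-l)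
      = ∑ k ∈ Finset.range (ν+1), ((2*ν-k).factorial : ℝ) / (((ν-k).factorial : ℝ) * (k.factorial : ℝ) * 2^(ν-k)) * t^k := by
    rw [← Finset.sum_range_reflect (fun k => ((2*ν-k).factorial : ℝ) / (((ν-k).factorial : ℝ) * (k.factorial : ℝ) * 2^(ν-k)) * t^k) (ν+1)]
    apply Finset.sum_congr rfl
    intro l hl
    have hlν : l ≤ ν := Nat.lt_succ_iff.mp (Finset.mem_range.mp hl)
    rw [show ν+1-1-l = ν-l by omega, show 2*ν-(ν-l) = ν+l by omega, show ν-(ν-l) = l by omega]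
  have hR : ∑ j ∈ Finset.range (ν+1), (if 2*j ≤ ν then cC ν j * t^(2*j) * ∑ m ∈ Finset.range (ν-2*j+1), t^m / (m.factorial : ℝ) else 0)
      = ∑ k ∈ Finset.range (ν+1), ((2*ν-k).factorial : ℝ) / (((ν-k).factorial : ℝ) * (k.factorial : ℝ) * 2^(ν-k)) * t^k := by
    have step1 : ∀ j ∈ Finset.range (ν+1),
        (if 2*j ≤ ν then cC ν j * t^(2*j) * ∑ m ∈ Finset.range (ν-2*j+1), t^m / (m.factorial : ℝ) else 0)
        = ∑ k ∈ Finset.range (ν+1), (if 2*j ≤ k then cC ν j / ((k-2*j).factorial : ℝ) * t^k else 0) := by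
      intro j _
      by_cases h : 2*j ≤ ν
      · simp only [h, if_true]
        have hfilter : (Finset.range (ν+1)).filter (fun k => 2*j ≤ k) = Finset.Ico (2*j) (ν+1) := by
          ext k; simp [Finset.mem_filter, Finset.mem_Ico]; omega
        rw [← Finset.sum_filter, hfilter, Finset.sum_Ico_eq_sum_range,
          show ν+1-2*j = ν-2*j+1 by omega, Finset.mul_sum]
        apply Finset.sum_congr rfl
        intro m _
        rw [show 2*j+m-2*j = m by omega, pow_add]
        ring
      · rw [if_neg h]
        symm
        apply Finset.sum_eq_zero
        intro k hk
        have : ¬ 2*j ≤ k := by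
          have := Finset.mem_range.mp hk; omega
        simp [this]
    rw [Finset.sum_congr rfl step1, Finset.sum_comm]
    apply Finset.sum_congr rfl
    intro k hk
    have hkν : k ≤ ν := Nat.lt_succ_iff.mp (Finset.mem_range.mp hk)
    have : ∀ j ∈ Finset.range (ν+1),
        (if 2*j ≤ k then cC ν j / ((k-2*j).factorial : ℝ) * t^k else 0)
        = (if 2*j ≤ k then cC ν j / ((k-2*j).factorial : ℝ) else 0) * t^k := by
      intro j _
      rw [ite_mul, zero_mul]
    rw [Finset.sum_congr rfl this, ← Finset.sum_mul, keyB ν k hkν]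
  rw [hL, hR]
/-- the triangular transition matrix -/
noncomputable def Tmat (M : ℕ) (γ : ℝ) : Matrix (Fin M) (Fin M) ℝ :=
  Matrix.of fun i i' : Fin M =>
    ∑ jj ∈ Finset.range (M - 1 - (i : ℕ) + 1),
      if (i' : ℕ) = (i : ℕ) + 2 * jj ∧ 2 * jj ≤ M - 1 - (i : ℕ) then
        (Real.pi / (γ ^ (2 * (M - 1 - (i : ℕ)) + 1) * 2 ^ (M - 1 - (i : ℕ)) *
          ((M - 1 - (i : ℕ)).factorial : ℝ))) * cC (M - 1 - (i : ℕ)) jj * γ ^ (2 * jj)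
      else 0

lemma row_eq (M : ℕ) (γ : ℝ) (hγ : 0 < γ) (i : Fin M) (x : ℝ) :
    x ^ (i : ℕ) * fM γ (M - (i : ℕ)) x
      = ∑ i' : Fin M, Tmat M γ i i' * gMn γ M ((i' : ℕ) + 1) x := by
  set ν : ℕ := M - 1 - (i : ℕ) with hν
  have hiM : (i : ℕ) < M := i.isLt
  set K : ℝ := Real.pi / (γ ^ (2 * ν + 1) * 2 ^ ν * (ν.factorial : ℝ)) with hK
  have step1 : x ^ (i : ℕ) * fM γ (M - (i : ℕ)) x
      = ∑ jj ∈ Finset.range (ν + 1),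
          (if 2 * jj ≤ ν then K * cC ν jj * γ ^ (2 * jj) * gMn γ M ((i : ℕ) + 2 * jj + 1) x
           else 0) := by
    rw [show M - (i : ℕ) = ν + 1 by omega, fM]
    simp only [Nat.add_sub_cancel]
    rw [show 2 * (ν + 1) - 1 = 2 * ν + 1 by omega]
    rw [keyC ν |γ * x|]
    rw [Finset.mul_sum, Finset.mul_sum]
    apply Finset.sum_congr rfl
    intro jj _
    by_cases h2 : 2 * jj ≤ ν
    · rw [if_pos h2, if_pos h2, gMn]
      simp only [Nat.add_sub_cancel]
      rw [show M - ((i : ℕ) + 2 * jj + 1) + 1 = ν - 2 * jj + 1 by omega]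
      rw [show |γ * x| ^ (2 * jj) = γ ^ (2 * jj) * x ^ (2 * jj) by
        rw [pow_mul, sq_abs]; ring]
      rw [pow_add]
      ring
    · simp [h2]
  rw [step1]
  symm
  have expand : ∀ i' : Fin M, Tmat M γ i i' * gMn γ M ((i' : ℕ) + 1) x
      = ∑ jj ∈ Finset.range (ν + 1),
          (if (i' : ℕ) = (i : ℕ) + 2 * jj ∧ 2 * jj ≤ ν then
            K * cC ν jj * γ ^ (2 * jj) else 0) * gMn γ M ((i' : ℕ) + 1) x := by
    intro i'
    rw [Tmat, Matrix.of_apply, Finset.sum_mul]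
  rw [Finset.sum_congr rfl (fun i' _ => expand i'), Finset.sum_comm]
  apply Finset.sum_congr rfl
  intro jj _
  by_cases h2 : 2 * jj ≤ ν
  · rw [if_pos h2]
    have hlt : (i : ℕ) + 2 * jj < M := by omega
    have hterm : ∀ i' : Fin M,
        (if (i' : ℕ) = (i : ℕ) + 2 * jj ∧ 2 * jj ≤ ν then
          K * cC ν jj * γ ^ (2 * jj) else 0) * gMn γ M ((i' : ℕ) + 1) x
        = if i' = ⟨(i : ℕ) + 2 * jj, hlt⟩ then
            (K * cC ν jj * γ ^ (2 * jj)) * gMn γ M ((i' : ℕ) + 1) x else 0 := by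
      intro i'
      by_cases hi' : i' = ⟨(i : ℕ) + 2 * jj, hlt⟩
      · rw [if_pos hi', if_pos ⟨by rw [hi'], h2⟩]
      · rw [if_neg hi', if_neg (fun hc => hi' (Fin.ext hc.1)), zero_mul]
    rw [Finset.sum_congr rfl (fun i' _ => hterm i'), Finset.sum_ite_eq' Finset.univ]
    simp
  · rw [if_neg h2]
    apply Finset.sum_eq_zero
    intro i' _
    rw [if_neg (fun hc => h2 hc.2), zero_mul]


/-- there is a nonzero constant `C`, depending only on `M` and `γ`, with
`det[ x_j^{i-1} · f_{M-i+1}(x_j) ] = C · det[ g_{M-i}(x_j) ]` for all real `x_1, …, x_M`. -/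
theorem det_f_eq_const_mul_det_g (M : ℕ) (hM : 1 ≤ M) (γ : ℝ) (hγ : 0 < γ) :
    ∃ C : ℝ, C ≠ 0 ∧ ∀ x : Fin M → ℝ,
      Matrix.det (Matrix.of fun i j : Fin M => (x j) ^ (i : ℕ) * fM γ (M - (i : ℕ)) (x j))
        = C * Matrix.det (Matrix.of fun i j : Fin M => gMn γ M ((i : ℕ) + 1) (x j)) := by
  refine ⟨Matrix.det (Tmat M γ), ?_, ?_⟩
  · have htri : (Tmat M γ).BlockTriangular id := by
      intro i i' hlt
      rw [Tmat, Matrix.of_apply]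
      apply Finset.sum_eq_zero
      intro jj _
      have hlt' : (i' : ℕ) < (i : ℕ) := hlt
      rw [if_neg]
      rintro ⟨h1, -⟩
      omega
    rw [Matrix.det_of_upperTriangular htri]
    apply Finset.prod_ne_zero_iff.mpr
    intro i _
    have hdiag : Tmat M γ i i
        = Real.pi / (γ ^ (2 * (M - 1 - (i : ℕ)) + 1) * 2 ^ (M - 1 - (i : ℕ)) *
            ((M - 1 - (i : ℕ)).factorial : ℝ)) * cC (M - 1 - (i : ℕ)) 0 * γ ^ (2 * 0) := by
      rw [Tmat, Matrix.of_apply]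
      rw [Finset.sum_eq_single 0 ?h0 ?h1]
      · rw [if_pos ⟨by omega, by omega⟩]
      case h0 =>
        intro jj _ hjj
        rw [if_neg]
        rintro ⟨h1, -⟩
        omega
      case h1 =>
        intro h
        exact absurd (Finset.mem_range.mpr (Nat.succ_pos _)) h
    rw [hdiag]
    have hc : (0:ℝ) < cC (M - 1 - (i : ℕ)) 0 := by
      rw [cC]
      norm_num
      positivity
    have hK : (0:ℝ) < Real.pi / (γ ^ (2 * (M - 1 - (i : ℕ)) + 1) * 2 ^ (M - 1 - (i : ℕ)) *
        ((M - 1 - (i : ℕ)).factorial : ℝ)) := by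
      apply div_pos Real.pi_pos
      have := Nat.factorial_pos (M - 1 - (i : ℕ))
      positivity
    positivity
  · intro x
    have hFT : (Matrix.of fun i j : Fin M => (x j) ^ (i : ℕ) * fM γ (M - (i : ℕ)) (x j))
        = Tmat M γ * (Matrix.of fun i j : Fin M => gMn γ M ((i : ℕ) + 1) (x j)) := by
      ext i j
      rw [Matrix.mul_apply]
      simp only [Matrix.of_apply]
      exact row_eq M γ hγ i (x j)
    rw [hFT, Matrix.det_mul]
end

section
/- Fix an integer M ≥ 1 and γ > 0. There exists a nonzero constant C, depending only on M and γ (but not on the points x_1, …, x_M), such that for all nonzero real numbers x_1, …, x_M one has det[ f_M^{(i-1)}(x_j) ]_{i,j=1}^{M} = C · det[ x_j^{i-1} · f_{M-i+1}(x_j) ]_{i,j=1}^{M}, where f_M^{(m)} denotes the m-th derivative of f_M. -/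
open Finset

/-!
For `x ≠ 0`, `f_{n+1}(x)` is a constant times `e^{-t} θ_n(t)` at `t = γ|x|`, where `θ_n` is the
reverse Bessel polynomial. The recurrences `θ_{n+2} = (2n+3) θ_{n+1} + t² θ_n` and
`θ_{n+1}' = θ_{n+1} - t θ_n` give `f_{n+2}' = -x f_{n+1} / (2(n+1))` together with a three-term
relation between `f_{n+1}`, `f_{n+2}`, `f_{n+3}`. Consequently `g_j(x) = x^j f_{M-j}(x)` has
derivative `a_j g_{j-1} + b_j g_{j+1}` with `b_j < 0`, so `f_M^{(m)}` is a combination of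
`g_0, …, g_m` whose coefficient on `g_m` is `b_0 ⋯ b_{m-1} ≠ 0`. The matrix of derivatives is
therefore a lower triangular matrix times the matrix of the `g_j`, and `C` is the product of the
diagonal entries.
-/

open Filter Topology

section Ladder

variable {𝕜 F : Type*} [NontriviallyNormedField 𝕜] [NormedAddCommGroup F] [NormedSpace 𝕜 F]

noncomputable def ladderCoeff (a b : ℕ → 𝕜) : ℕ → ℕ → 𝕜
  | 0, j => if j = 0 then 1 else 0
  | m + 1, 0 => ladderCoeff a b m 1 * a 1
  | m + 1, j + 1 => ladderCoeff a b m (j + 2) * a (j + 2) + ladderCoeff a b m j * b j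

variable {a b : ℕ → 𝕜}

lemma ladderCoeff_eq_zero_of_lt {m j : ℕ} (h : m < j) : ladderCoeff a b m j = 0 := by
  induction m generalizing j with
  | zero => simp [ladderCoeff, h.ne']
  | succ m ih =>
    obtain ⟨j, rfl⟩ : ∃ i, j = i + 1 := ⟨j - 1, by omega⟩
    simp [ladderCoeff, ih (by omega : m < j + 2), ih (by omega : m < j)]

lemma ladderCoeff_self (m : ℕ) : ladderCoeff a b m m = ∏ i ∈ range m, b i := by
  induction m with
  | zero => simp [ladderCoeff]
  | succ m ih => simp [ladderCoeff, ladderCoeff_eq_zero_of_lt, ih, prod_range_succ, mul_comm]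

lemma sum_ladderCoeff_smul_succ (ha : a 0 = 0) (m : ℕ) (v : ℕ → F) :
    ∑ j ∈ range (m + 1), ladderCoeff a b m j • (a j • v (j - 1) + b j • v (j + 1))
      = ∑ j ∈ range (m + 2), ladderCoeff a b (m + 1) j • v j := by
  have hlower : ∑ j ∈ range (m + 1), (ladderCoeff a b m j * a j) • v (j - 1)
      = ∑ j ∈ range (m + 2), (ladderCoeff a b m (j + 1) * a (j + 1)) • v j := by
    rw [sum_range_succ', sum_range_succ _ (m + 1), sum_range_succ _ m]
    simp [ha, ladderCoeff_eq_zero_of_lt]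
  rw [sum_range_succ' _ (m + 1)]
  simp only [smul_add, smul_smul, sum_add_distrib]
  rw [hlower, sum_range_succ' (fun j => (ladderCoeff a b m (j + 1) * a (j + 1)) • v j)]
  simp only [ladderCoeff, add_smul, sum_add_distrib]
  abel

variable {g : ℕ → 𝕜 → F} {U : Set 𝕜} {N : ℕ}

theorem iteratedDeriv_eq_sum_ladderCoeff (hU : IsOpen U) (ha : a 0 = 0)
    (hg : ∀ j, j + 1 < N → ∀ x ∈ U,
      HasDerivAt (g j) (a j • g (j - 1) x + b j • g (j + 1) x) x)
    {m : ℕ} (hm : m < N) {x : 𝕜} (hx : x ∈ U) :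
    iteratedDeriv m (g 0) x = ∑ j ∈ range (m + 1), ladderCoeff a b m j • g j x := by
  induction m generalizing x with
  | zero => simp [ladderCoeff]
  | succ m ih =>
    have hev : iteratedDeriv m (g 0) =ᶠ[𝓝 x]
        fun y => ∑ j ∈ range (m + 1), ladderCoeff a b m j • g j y :=
      eventually_of_mem (hU.mem_nhds hx) fun y hy => ih (by omega) hy
    rw [iteratedDeriv_succ, hev.deriv_eq, ← sum_ladderCoeff_smul_succ ha]
    exact (HasDerivAt.fun_sum fun j hj =>
      (hg j (by simp at hj; omega) x hx).const_smul (ladderCoeff a b m j)).deriv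

end Ladder

theorem Matrix.det_eq_prod_mul_det_of_apply_eq_sum {R : Type*} [CommRing R] {n : ℕ}
    (A : Fin n → Fin n → R) (B : ℕ → Fin n → R) (L : ℕ → ℕ → R)
    (h : ∀ i k, A i k = ∑ j ∈ range (i + 1), L i j * B j k) :
    (Matrix.of A).det = (∏ i : Fin n, L i i) * (Matrix.of fun i k : Fin n => B i k).det := by
  let T : Matrix (Fin n) (Fin n) R := Matrix.of fun i j => if (j : ℕ) ≤ i then L i j else 0
  have hT : T.IsLowerTriangular := fun i j hij => if_neg (not_le.2 hij)
  have hA : Matrix.of A = T * Matrix.of fun i k : Fin n => B i k := by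
    ext i k
    rw [Matrix.of_apply, h, Matrix.mul_apply]
    simp only [T, Matrix.of_apply, ite_mul, zero_mul]
    rw [Fin.sum_univ_eq_sum_range (fun j => if j ≤ (i : ℕ) then L i j * B j k else 0),
      ← sum_filter]
    congr 1
    ext j
    simp only [mem_filter, mem_range]
    omega
  rw [hA, Matrix.det_mul, Matrix.det_of_isLowerTriangular T hT]
  simp [T]

noncomputable def besselCoeff (n l : ℕ) : ℝ :=
  if l ≤ n then ((n + l).factorial : ℝ) / (l.factorial * (n - l).factorial * 2 ^ l) else 0

lemma besselCoeff_of_lt {n l : ℕ} (h : n < l) : besselCoeff n l = 0 := if_neg (by omega)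

@[simp] lemma besselCoeff_zero_right (n : ℕ) : besselCoeff n 0 = 1 := by
  simp [besselCoeff, (Nat.factorial_pos n).ne']

lemma besselCoeff_succ_right_mul (n l : ℕ) :
    besselCoeff n (l + 1) * (2 * (l + 1)) = (n + l + 1) * (n - l) * besselCoeff n l := by
  rcases lt_or_ge l n with hl | hl
  · obtain ⟨d, rfl⟩ : ∃ d, n = l + d + 1 := ⟨n - l - 1, by omega⟩
    simp only [besselCoeff, if_pos hl.le, if_pos (by omega : l + 1 ≤ l + d + 1),
      show l + d + 1 - (l + 1) = d by omega, show l + d + 1 - l = d + 1 by omega,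
      show l + d + 1 + (l + 1) = l + d + 1 + l + 1 by omega]
    push_cast [Nat.factorial_succ, pow_succ]
    field_simp
    ring
  · rw [besselCoeff_of_lt (by omega)]
    rcases hl.eq_or_lt with rfl | hl
    · ring
    · rw [besselCoeff_of_lt hl]; ring

lemma besselCoeff_succ_left_mul (n l : ℕ) :
    besselCoeff (n + 1) l * (n + 1 - l) = (n + 1 + l) * besselCoeff n l := by
  rcases le_or_gt l n with hl | hl
  · obtain ⟨d, rfl⟩ : ∃ d, n = l + d := ⟨n - l, by omega⟩
    simp only [besselCoeff, if_pos hl, if_pos (by omega : l ≤ l + d + 1),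
      show l + d + 1 - l = d + 1 by omega, show l + d - l = d by omega,
      show l + d + 1 + l = l + d + l + 1 by omega]
    push_cast [Nat.factorial_succ]
    field_simp
    ring
  · rw [besselCoeff_of_lt hl]
    rcases (Nat.succ_le_of_lt hl).eq_or_lt with rfl | hl'
    · push_cast; ring
    · rw [besselCoeff_of_lt hl']; ring

lemma besselCoeff_add_two_succ (n i : ℕ) :
    besselCoeff (n + 2) (i + 1) = (2 * n + 3) * besselCoeff (n + 1) i + besselCoeff n (i + 1) := by
  have e1 := besselCoeff_succ_right_mul (n + 2) i
  have e2 := besselCoeff_succ_left_mul (n + 1) i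
  have e3 := besselCoeff_succ_right_mul n i
  have e4 := besselCoeff_succ_left_mul n i
  push_cast at *
  have h : (2 * ((i : ℝ) + 1) * (n + 1 + i)) ≠ 0 := by positivity
  refine mul_right_cancel₀ h ?_
  linear_combination (n + i + 1) * e1 + (n + i + 1) * (n + i + 3) * e2 - (n + i + 1) * e3
    + (n + i + 1) * (n - i) * e4

noncomputable def revBessel (n : ℕ) (t : ℝ) : ℝ :=
  ∑ l ∈ range (n + 1), besselCoeff n l * t ^ (n - l)

lemma besselCoeff_mul_pow_add (n k l : ℕ) (t : ℝ) :
    besselCoeff n l * t ^ (n + k - l) = t ^ k * (besselCoeff n l * t ^ (n - l)) := by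
  rcases le_or_gt l n with hl | hl
  · rw [show n + k - l = k + (n - l) by omega, pow_add]; ring
  · simp [besselCoeff_of_lt hl]

lemma revBessel_eq_sum_range {n N : ℕ} (h : n < N) (t : ℝ) :
    revBessel n t = ∑ l ∈ range N, besselCoeff n l * t ^ (n - l) :=
  sum_subset (range_subset_range.2 h) fun l _ hl => by
    rw [besselCoeff_of_lt (by simpa using hl), zero_mul]

lemma pow_two_mul_revBessel (n : ℕ) (t : ℝ) :
    t ^ 2 * revBessel n t = ∑ l ∈ range (n + 3), besselCoeff n l * t ^ (n + 2 - l) := by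
  simp_rw [revBessel_eq_sum_range (by omega : n < n + 3), mul_sum, besselCoeff_mul_pow_add]

lemma revBessel_add_two (n : ℕ) (t : ℝ) :
    revBessel (n + 2) t = (2 * n + 3) * revBessel (n + 1) t + t ^ 2 * revBessel n t := by
  rw [pow_two_mul_revBessel, revBessel, sum_range_succ', sum_range_succ' _ (n + 2), revBessel,
    mul_sum]
  simp_rw [besselCoeff_add_two_succ, add_mul, sum_add_distrib, besselCoeff_zero_right,
    show ∀ l, n + 2 - (l + 1) = n + 1 - l by omega, mul_assoc]
  ring

lemma hasDerivAt_revBessel_succ (n : ℕ) (t : ℝ) :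
    HasDerivAt (revBessel (n + 1)) (revBessel (n + 1) t - t * revBessel n t) t := by
  induction n using Nat.twoStepInduction generalizing t with
  | zero =>
    have h : revBessel 1 = fun t => t + 1 := by
      ext t; simp [revBessel, sum_range_succ, besselCoeff]
    rw [h]
    refine ((hasDerivAt_id t).add_const 1).congr_deriv ?_
    simp [revBessel]
  | one =>
    have h : revBessel 2 = fun t => t ^ 2 + 3 * t + 3 := by
      ext t; simp [revBessel, sum_range_succ, besselCoeff, Nat.factorial]; norm_num
    rw [h]
    refine (((hasDerivAt_pow 2 t).add ((hasDerivAt_id t).const_mul 3)).add_const 3).congr_deriv ?_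
    simp [revBessel, sum_range_succ, besselCoeff]
    ring
  | more n ih₀ ih₁ =>
    rw [funext (revBessel_add_two (n + 1))]
    refine (((ih₁ t).const_mul _).add ((hasDerivAt_pow 2 t).mul (ih₀ t))).congr_deriv ?_
    beta_reduce
    push_cast
    linear_combination t * revBessel_add_two n t

/-- The reduced Bessel function `e^{-t} θ_n(t) = √(2/π) t^{n+1/2} K_{n+1/2}(t)`. -/
noncomputable def reducedBesselK (n : ℕ) (t : ℝ) : ℝ := Real.exp (-t) * revBessel n t

lemma reducedBesselK_add_two (n : ℕ) (t : ℝ) :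
    reducedBesselK (n + 2) t
      = (2 * n + 3) * reducedBesselK (n + 1) t + t ^ 2 * reducedBesselK n t := by
  simp only [reducedBesselK, revBessel_add_two]
  ring

lemma hasDerivAt_reducedBesselK_succ (n : ℕ) (t : ℝ) :
    HasDerivAt (reducedBesselK (n + 1)) (-t * reducedBesselK n t) t := by
  refine ((hasDerivAt_neg t).exp.mul (hasDerivAt_revBessel_succ n t)).congr_deriv ?_
  simp only [reducedBesselK]
  ring

lemma hasDerivAt_reducedBesselK_succ_mul_abs (n : ℕ) (c : ℝ) {x : ℝ} (hx : x ≠ 0) :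
    HasDerivAt (fun y => reducedBesselK (n + 1) (c * |y|))
      (-(c ^ 2 * x) * reducedBesselK n (c * |x|)) x := by
  refine ((hasDerivAt_reducedBesselK_succ n _).comp x
    ((hasDerivAt_abs hx).const_mul c)).congr_deriv ?_
  linear_combination (-(c ^ 2) * reducedBesselK n (c * |x|)) * abs_mul_sign x

noncomputable def fMConst (γ : ℝ) (M : ℕ) : ℝ :=
  Real.pi / (γ ^ (2 * M - 1) * 2 ^ (M - 1) * (Nat.factorial (M - 1)))

lemma fM_succ {γ : ℝ} (hγ : 0 ≤ γ) (n : ℕ) (x : ℝ) :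
    fM γ (n + 1) x = fMConst γ (n + 1) * reducedBesselK n (γ * |x|) := by
  simp only [fM, fMConst, reducedBesselK, revBessel, Nat.add_sub_cancel, neg_mul, abs_mul,
    abs_of_nonneg hγ]
  rw [mul_assoc]
  congr 2
  refine sum_congr rfl fun l hl => ?_
  rw [besselCoeff, if_pos (by simpa [Nat.lt_succ_iff] using hl)]

lemma fMConst_succ {γ : ℝ} (hγ : γ ≠ 0) (n : ℕ) :
    fMConst γ (n + 1) = 2 * (n + 1) * γ ^ 2 * fMConst γ (n + 2) := by
  simp only [fMConst, show 2 * (n + 2) - 1 = 2 * (n + 1) - 1 + 2 by omega, Nat.add_sub_cancel,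
    pow_succ]
  push_cast [Nat.factorial_succ]
  field_simp
  ring

lemma hasDerivAt_fM_add_two {γ : ℝ} (hγ : 0 < γ) (n : ℕ) {x : ℝ} (hx : x ≠ 0) :
    HasDerivAt (fM γ (n + 2)) (-(x / (2 * (n + 1))) * fM γ (n + 1) x) x := by
  rw [funext (fM_succ hγ.le (n + 1))]
  refine ((hasDerivAt_reducedBesselK_succ_mul_abs n γ hx).const_mul _).congr_deriv ?_
  rw [fM_succ hγ.le, fMConst_succ hγ.ne' n]
  field_simp

lemma fM_add_three {γ : ℝ} (hγ : 0 < γ) (n : ℕ) (x : ℝ) :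
    4 * (n + 1) * (n + 2) * γ ^ 2 * fM γ (n + 3) x
      = 2 * (n + 1) * (2 * n + 3) * fM γ (n + 2) x + x ^ 2 * fM γ (n + 1) x := by
  rw [fM_succ hγ.le (n + 2), fM_succ hγ.le (n + 1), fM_succ hγ.le n, reducedBesselK_add_two,
    fMConst_succ hγ.ne' n, fMConst_succ hγ.ne' (n + 1), mul_pow, sq_abs]
  push_cast
  ring

noncomputable def fMLowerCoeff (γ : ℝ) (M j : ℕ) : ℝ :=
  2 * j * (M - j) * γ ^ 2 / (2 * M - 2 * j - 1)

noncomputable def fMRaiseCoeff (M j : ℕ) : ℝ :=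
  -(2 * M - j - 1) / (2 * (M - j - 1) * (2 * M - 2 * j - 1))

lemma fMRaiseCoeff_neg {M j : ℕ} (h : j + 2 ≤ M) : fMRaiseCoeff M j < 0 := by
  have h' : (j : ℝ) + 2 ≤ M := by exact_mod_cast h
  unfold fMRaiseCoeff
  exact div_neg_of_neg_of_pos (by linarith) (mul_pos (by linarith) (by linarith))

lemma hasDerivAt_pow_mul_fM {γ : ℝ} (hγ : 0 < γ) {M j : ℕ} (hj : j + 2 ≤ M) {x : ℝ}
    (hx : x ≠ 0) :
    HasDerivAt (fun y => y ^ j * fM γ (M - j) y)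
      (fMLowerCoeff γ M j * (x ^ (j - 1) * fM γ (M - (j - 1)) x)
        + fMRaiseCoeff M j * (x ^ (j + 1) * fM γ (M - (j + 1)) x)) x := by
  obtain ⟨n, rfl⟩ : ∃ n, M = j + n + 2 := ⟨M - j - 2, by omega⟩
  rw [show j + n + 2 - j = n + 2 by omega]
  refine ((hasDerivAt_pow j x).mul (hasDerivAt_fM_add_two hγ n hx)).congr_deriv ?_
  have hrec : fM γ (n + 2) x = (4 * (n + 1) * (n + 2) * γ ^ 2 * fM γ (n + 3) x
      - x ^ 2 * fM γ (n + 1) x) / (2 * (n + 1) * (2 * n + 3)) := by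
    rw [fM_add_three hγ n x]
    field_simp
    ring
  have ha : fMLowerCoeff γ (j + n + 2) j = 2 * j * (n + 2) * γ ^ 2 / (2 * n + 3) := by
    simp only [fMLowerCoeff]; push_cast; ring_nf
  have hb : fMRaiseCoeff (j + n + 2) j = -(j + 2 * n + 3) / (2 * (n + 1) * (2 * n + 3)) := by
    simp only [fMRaiseCoeff]; push_cast; ring_nf
  rw [hrec, ha, hb, show j + n + 2 - (j + 1) = n + 1 by omega]
  rcases j with _ | i
  · field_simp
    ring
  · rw [show i + 1 + n + 2 - (i + 1 - 1) = n + 3 by omega, Nat.add_sub_cancel]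
    push_cast
    field_simp
    ring

theorem iteratedDeriv_fM_eq_sum {γ : ℝ} (hγ : 0 < γ) {M m : ℕ} (hm : m < M) {x : ℝ}
    (hx : x ≠ 0) :
    iteratedDeriv m (fM γ M) x = ∑ j ∈ range (m + 1),
      ladderCoeff (fMLowerCoeff γ M) (fMRaiseCoeff M) m j * (x ^ j * fM γ (M - j) x) := by
  have h := iteratedDeriv_eq_sum_ladderCoeff (g := fun j y => y ^ j * fM γ (M - j) y)
    (U := {0}ᶜ) isOpen_compl_singleton (by simp [fMLowerCoeff])
    (fun j hj y hy => hasDerivAt_pow_mul_fM hγ (by omega) hy) hm hx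
  simpa using h

theorem det_derivs_eq_const_mul_det_general (M : ℕ) (γ : ℝ) (hγ : 0 < γ) :
    ∃ C : ℝ, C ≠ 0 ∧ ∀ x : Fin M → ℝ, (∀ j, x j ≠ 0) →
      Matrix.det (Matrix.of fun i j : Fin M => iteratedDeriv (i : ℕ) (fM γ M) (x j))
        = C * Matrix.det
            (Matrix.of fun i j : Fin M => (x j) ^ (i : ℕ) * fM γ (M - (i : ℕ)) (x j)) := by
  refine ⟨∏ i : Fin M, ladderCoeff (fMLowerCoeff γ M) (fMRaiseCoeff M) i i, ?_,
    fun x hx => ?_⟩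
  · simp only [ladderCoeff_self]
    exact prod_ne_zero_iff.2 fun i _ => prod_ne_zero_iff.2 fun k hk =>
      (fMRaiseCoeff_neg (by simp at hk; omega)).ne
  · exact Matrix.det_eq_prod_mul_det_of_apply_eq_sum _ (fun j k => x k ^ j * fM γ (M - j) (x k)) _
      fun i k => iteratedDeriv_fM_eq_sum hγ i.isLt (hx k)

/-- there is a nonzero constant `C`, depending only on `M` and `γ`, with
`det[ f_M^{(i-1)}(x_j) ] = C · det[ x_j^{i-1} · f_{M-i+1}(x_j) ]`
for all nonzero real `x_1, …, x_M`, where `f_M^{(m)}` is the `m`-th derivative of `f_M`. -/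
theorem det_derivs_eq_const_mul_det (M : ℕ) (hM : 1 ≤ M) (γ : ℝ) (hγ : 0 < γ) :
    ∃ C : ℝ, C ≠ 0 ∧ ∀ x : Fin M → ℝ, (∀ j, x j ≠ 0) →
      Matrix.det (Matrix.of fun i j : Fin M => iteratedDeriv (i : ℕ) (fM γ M) (x j))
        = C * Matrix.det
            (Matrix.of fun i j : Fin M => (x j) ^ (i : ℕ) * fM γ (M - (i : ℕ)) (x j)) :=
  det_derivs_eq_const_mul_det_general M γ hγ
end

section
/- Let M ≥ 1 and let φ_1, …, φ_M be complex-valued functions, each analytic on a neighborhood of 0 in ℂ. Then the limit, as the tuple (η_1, …, η_M) of pairwise distinct complex numbers tends to (0, …, 0), of det[ φ_i(η_j) ]_{i,j=1}^{M} / ∏_{1 ≤ i < j ≤ M} (η_j - η_i) exists and equals (∏_{n=0}^{M-1} 1/n!) · det[ φ_i^{(j-1)}(0) ]_{i,j=1}^{M}, where φ^{(k)} denotes the k-th complex derivative. -/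
/-!
Multiplying the matrix `φ i (η j)` on the right by an upper triangular matrix whose determinant
is the inverse Vandermonde product produces the matrix of divided differences
`φ i [η 0, …, η j]`. By Hermite's formula these are the contour integrals
`(2πi)⁻¹ ∮ φ i z / ∏_{l ≤ j} (z - η l) dz`, which depend continuously on `η` near `0`; at `η = 0`
Cauchy's formula for derivatives evaluates them to `φ_i^{(j)}(0) / j!`.
-/

open Finset Filter Complex Metric Real Topology

section DivDiff

variable {ι K E : Type*} [DecidableEq ι] [Field K] [AddCommGroup E] [Module K E]

/-- The divided difference `f[η l : l ∈ s]`, in Lagrange's form. -/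
def divDiff (s : Finset ι) (η : ι → K) (f : K → E) : E :=
  ∑ l ∈ s, (∏ m ∈ s.erase l, (η l - η m))⁻¹ • f (η l)

/-- Partial fractions: evaluate `∑ l ∈ s, Lagrange.basis s η l = 1` at `z`. -/
theorem divDiff_inv_sub {s : Finset ι} (hs : s.Nonempty) {η : ι → K} (hη : Set.InjOn η s)
    {z : K} (hz : ∀ l ∈ s, z ≠ η l) :
    divDiff s η (fun w => (z - w)⁻¹) = (∏ l ∈ s, (z - η l))⁻¹ := by
  refine eq_inv_of_mul_eq_one_left ?_
  have hz' : ∀ l ∈ s, z - η l ≠ 0 := fun l hl => sub_ne_zero.2 (hz l hl)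
  rw [← Polynomial.eval_one (x := z), ← Lagrange.sum_basis hη hs, Polynomial.eval_finsetSum,
    divDiff, Finset.sum_mul]
  refine Finset.sum_congr rfl fun l hl => ?_
  rw [smul_eq_mul, mul_assoc, ← Finset.mul_prod_erase s _ hl, inv_mul_cancel_left₀ (hz' l hl),
    Lagrange.basis, Polynomial.eval_prod, ← Finset.prod_inv_distrib, ← Finset.prod_mul_distrib]
  refine Finset.prod_congr rfl fun m _ => ?_
  simp [Lagrange.basisDivisor]

/-- Column operations turning the matrix `φ i (η j)` into the matrix of Newton divided
differences; the transition matrix is upper triangular with diagonal `∏_{m<j} (η j - η m)⁻¹`. -/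
theorem det_divDiff_Iic {M : ℕ} (φ : Fin M → K → K) (η : Fin M → K) :
    (Matrix.of fun i j : Fin M => divDiff (Iic j) η (φ i)).det =
      (Matrix.of fun i j : Fin M => φ i (η j)).det / ∏ i : Fin M, ∏ j ∈ Ioi i, (η j - η i) := by
  let W : Matrix (Fin M) (Fin M) K := Matrix.of fun l j =>
    if l ≤ j then (∏ m ∈ (Iic j).erase l, (η l - η m))⁻¹ else 0
  have hmul : (Matrix.of fun i j : Fin M => divDiff (Iic j) η (φ i)) =
      (Matrix.of fun i j : Fin M => φ i (η j)) * W := by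
    ext i j
    simp only [divDiff, Matrix.mul_apply, Matrix.of_apply, W, mul_ite, mul_zero, smul_eq_mul]
    rw [Finset.sum_ite, Finset.sum_const_zero, add_zero]
    exact Finset.sum_congr (by ext; simp) fun l _ => mul_comm _ _
  have hW : W.det = (∏ i : Fin M, ∏ j ∈ Ioi i, (η j - η i))⁻¹ := by
    rw [Matrix.det_of_isUpperTriangular (M := W) fun a b hab => if_neg (not_le.2 hab),
      Finset.prod_comm' (t' := univ) (s' := fun j => Iio j) (by simp), ← Finset.prod_inv_distrib]
    simp [W, Finset.Iic_erase]
  rw [hmul, Matrix.det_mul, hW, div_eq_mul_inv]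

end DivDiff

section CircleDivDiff

variable {ι E : Type*} [NormedAddCommGroup E] [NormedSpace ℂ E]

noncomputable def circleDivDiff (f : ℂ → E) (c : ℂ) (R : ℝ) (s : Finset ι) (η : ι → ℂ) : E :=
  (2 * π * I)⁻¹ • ∮ z in C(c, R), (∏ l ∈ s, (z - η l))⁻¹ • f z

theorem continuousOn_circleDivDiff {f : ℂ → E} {c : ℂ} {R : ℝ} (hR : 0 ≤ R)
    (hf : ContinuousOn f (sphere c R)) (s : Finset ι) :
    ContinuousOn (circleDivDiff f c R s) ((s : Set ι).pi fun _ => ball c R) := by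
  rw [continuousOn_iff_continuous_domRestrict]
  refine continuous_const.smul
    (intervalIntegral.continuous_parametric_intervalIntegral_of_continuous' ?_ 0 (2 * π))
  have hcircle : Continuous fun p : ((s : Set ι).pi fun _ => ball c R) × ℝ =>
      circleMap c R p.2 := (continuous_circleMap c R).comp continuous_snd
  have hprod_ne : ∀ p : ((s : Set ι).pi fun _ => ball c R) × ℝ,
      ∏ l ∈ s, (circleMap c R p.2 - (p.1 : ι → ℂ) l) ≠ 0 := by
    refine fun p => Finset.prod_ne_zero_iff.2 fun l hl => sub_ne_zero.2 fun h => ?_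
    have := p.1.2 l hl
    rw [← h, mem_ball, mem_sphere.1 (circleMap_mem_sphere c hR _)] at this
    exact lt_irrefl R this
  have hderiv : Continuous fun p : ((s : Set ι).pi fun _ => ball c R) × ℝ =>
      deriv (circleMap c R) p.2 := by
    simp only [deriv_circleMap]
    fun_prop
  refine hderiv.smul
    (((continuous_finsetProd s fun l _ => hcircle.sub
      ((continuous_apply l).comp (continuous_subtype_val.comp continuous_fst))).inv₀
      hprod_ne).smul (hf.comp_continuous hcircle fun p => circleMap_mem_sphere c hR p.2))

variable [CompleteSpace E] {f : ℂ → E} {c : ℂ} {R : ℝ}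

/-- Hermite's formula: expand in partial fractions and apply Cauchy's integral formula. -/
theorem DiffContOnCl.circleDivDiff_eq_divDiff [DecidableEq ι] (hf : DiffContOnCl ℂ f (ball c R))
    {s : Finset ι} (hs : s.Nonempty) {η : ι → ℂ} (hη : Set.InjOn η s)
    (hmem : ∀ l ∈ s, η l ∈ ball c R) :
    circleDivDiff f c R s η = divDiff s η f := by
  have hR : 0 ≤ R := by
    obtain ⟨l, hl⟩ := hs
    exact (dist_nonneg.trans_lt (hmem l hl)).le
  have hne : ∀ z ∈ sphere c R, ∀ l ∈ s, z ≠ η l := fun z hz l hl h =>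
    (mem_sphere.1 hz ▸ mem_ball.1 (h ▸ hmem l hl)).false
  have hpf : Set.EqOn (fun z => (∏ l ∈ s, (z - η l))⁻¹ • f z)
      (fun z => ∑ l ∈ s, (∏ m ∈ s.erase l, (η l - η m))⁻¹ • ((z - η l)⁻¹ • f z))
      (sphere c R) := fun z hz => by
    simp only [← divDiff_inv_sub hs hη (hne z hz), divDiff, Finset.sum_smul, smul_assoc]
  have hint : ∀ l ∈ s, CircleIntegrable
      (fun z => (∏ m ∈ s.erase l, (η l - η m))⁻¹ • ((z - η l)⁻¹ • f z)) c R := fun l hl =>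
    ((((continuousOn_id.sub continuousOn_const).inv₀ fun z hz =>
      sub_ne_zero.2 (hne z hz l hl)).smul
      (hf.continuousOn_ball.mono sphere_subset_closedBall)).const_smul _).circleIntegrable hR
  rw [circleDivDiff, circleIntegral.integral_congr hR hpf, circleIntegral.integral_fun_sum hint,
    Finset.smul_sum, divDiff]
  refine Finset.sum_congr rfl fun l hl => ?_
  rw [circleIntegral.integral_smul, hf.circleIntegral_sub_inv_smul (hmem l hl), smul_comm,
    inv_smul_smul₀ two_pi_I_ne_zero]

theorem DiffContOnCl.circleDivDiff_const (hf : DiffContOnCl ℂ f (ball c R)) (hR : 0 < R)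
    {s : Finset ι} {n : ℕ} (hs : #s = n + 1) :
    circleDivDiff f c R s (fun _ => c) = (n.factorial : ℂ)⁻¹ • iteratedDeriv n f c := by
  simp only [circleDivDiff, Finset.prod_const, hs, ← one_div,
    hf.circleIntegral_one_div_sub_center_pow_smul hR n, smul_smul]
  congr 1
  field_simp

end CircleDivDiff

theorem exists_forall_diffContOnCl_ball {ι E : Type*} [Finite ι] [NormedAddCommGroup E]
    [NormedSpace ℂ E] [CompleteSpace E] {f : ι → ℂ → E} {c : ℂ} (hf : ∀ i, AnalyticAt ℂ (f i) c) :
    ∃ r > 0, ∀ i, DiffContOnCl ℂ (f i) (ball c r) := by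
  have hsmall : ∀ i, ∀ᶠ r in 𝓝[>] (0 : ℝ), DiffContOnCl ℂ (f i) (ball c r) := fun i => by
    obtain ⟨ρ, hρ, hana⟩ := (hf i).exists_ball_analyticOnNhd
    filter_upwards [Ioo_mem_nhdsGT hρ] with r hr
    exact hana.differentiableOn.diffContOnCl_ball (closedBall_subset_ball hr.2)
  obtain ⟨r, hdiff, hr⟩ := ((eventually_all.2 hsmall).and self_mem_nhdsWithin).exists
  exact ⟨r, hr, hdiff⟩

theorem det_ratio_vandermonde_limit_general (M : ℕ) (φ : Fin M → ℂ → ℂ)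
    (hφ : ∀ i, AnalyticAt ℂ (φ i) 0) :
    Filter.Tendsto
      (fun η : Fin M → ℂ =>
        Matrix.det (Matrix.of fun i j : Fin M => φ i (η j)) /
          ∏ i : Fin M, ∏ j ∈ Finset.Ioi i, (η j - η i))
      (nhdsWithin 0 {η : Fin M → ℂ | Function.Injective η})
      (nhds ((∏ n ∈ Finset.range M, (1 : ℂ) / (Nat.factorial n : ℂ)) *
        Matrix.det (Matrix.of fun i j : Fin M => iteratedDeriv (j : ℕ) (φ i) 0))) := by
  obtain ⟨r, hr, hφr⟩ := exists_forall_diffContOnCl_ball hφ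
  let G : (Fin M → ℂ) → Matrix (Fin M) (Fin M) ℂ := fun η =>
    Matrix.of fun i j => circleDivDiff (φ i) 0 r (Iic j) η
  have hball : ∀ j : Fin M, ((Iic j : Finset (Fin M)) : Set (Fin M)).pi (fun _ => ball (0 : ℂ) r)
      ∈ 𝓝 0 := fun j => set_pi_mem_nhds (Iic j).finite_toSet fun _ _ => ball_mem_nhds 0 hr
  have hG : ContinuousAt (fun η => (G η).det) 0 :=
    continuous_id.matrix_det.continuousAt.comp (continuousAt_pi.2 fun i => continuousAt_pi.2
      fun j => (continuousOn_circleDivDiff hr.le ((hφr i).continuousOn_ball.mono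
        sphere_subset_closedBall) _).continuousAt (hball j))
  have hG0 : (G 0).det = (∏ n ∈ Finset.range M, (1 : ℂ) / (Nat.factorial n : ℂ)) *
      Matrix.det (Matrix.of fun i j : Fin M => iteratedDeriv (j : ℕ) (φ i) 0) := by
    rw [← Fin.prod_univ_eq_prod_range, ← Matrix.det_mul_row]
    congr 1
    ext i j
    simp [G, Pi.zero_def, (hφr i).circleDivDiff_const hr (Fin.card_Iic j)]
  have hGeq : ∀ᶠ η in 𝓝[{η : Fin M → ℂ | Function.Injective η}] 0,
      (G η).det = (Matrix.of fun i j : Fin M => φ i (η j)).det /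
        ∏ i : Fin M, ∏ j ∈ Ioi i, (η j - η i) := by
    filter_upwards [mem_nhdsWithin_of_mem_nhds (eventually_all.2 hball), self_mem_nhdsWithin]
      with η hηr hη
    rw [← det_divDiff_Iic]
    congr 1
    ext i j
    exact (hφr i).circleDivDiff_eq_divDiff nonempty_Iic hη.injOn (hηr j)
  exact hG0 ▸ (hG.tendsto.mono_left nhdsWithin_le_nhds).congr' hGeq

/-- Let `M ≥ 1` and let `φ_1, …, φ_M : ℂ → ℂ` each be analytic near `0`.
Then, as the tuple `(η_1, …, η_M)` of pairwise distinct complex numbers tends to `0`,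
`det[ φ_i(η_j) ] / ∏_{i<j} (η_j - η_i)` tends to
`(∏_{n=0}^{M-1} 1/n!) · det[ φ_i^{(j-1)}(0) ]`. -/
theorem det_ratio_vandermonde_limit (M : ℕ) (hM : 1 ≤ M) (φ : Fin M → ℂ → ℂ)
    (hφ : ∀ i, AnalyticAt ℂ (φ i) 0) :
    Filter.Tendsto
      (fun η : Fin M → ℂ =>
        Matrix.det (Matrix.of fun i j : Fin M => φ i (η j)) /
          ∏ i : Fin M, ∏ j ∈ Finset.Ioi i, (η j - η i))
      (nhdsWithin 0 {η : Fin M → ℂ | Function.Injective η})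
      (nhds ((∏ n ∈ Finset.range M, (1 : ℂ) / (Nat.factorial n : ℂ)) *
        Matrix.det (Matrix.of fun i j : Fin M => iteratedDeriv (j : ℕ) (φ i) 0))) :=
  det_ratio_vandermonde_limit_general M φ hφ
end
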